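/- Let z, z' ∈ ℝ^k and φ ∈ [0,1]. Then |(z,0) - (√(1-φ²)z', φz')|² ≥ ((1 + √(1-φ²))/2)·|z' - z|² ≥ |z' - z|²/2. -/

import Mathlib

/-!
With `s = √(1 - φ²)` one has `s ≤ 1` and `s² + φ² ≥ 1`, so the left-hand side is
at least `‖z‖² - 2 s ⟪z, z'⟫ + ‖z'‖² = (1 + s)/2 · ‖z' - z‖² + (1 - s)/2 · ‖z + z'‖²`.
-/

section InnerProductSpace

variable {E : Type*} [NormedAddCommGroup E] [InnerProductSpace ℝ E]

open scoped RealInnerProductSpace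

theorem norm_sq_sub_two_mul_inner_add_norm_sq (z z' : E) (s : ℝ) :
    ‖z‖ ^ 2 - 2 * s * ⟪z, z'⟫ + ‖z'‖ ^ 2
      = (1 + s) / 2 * ‖z' - z‖ ^ 2 + (1 - s) / 2 * ‖z + z'‖ ^ 2 := by
  rw [norm_sub_sq_real, norm_add_sq_real, real_inner_comm z' z]
  ring

theorem mul_norm_sub_sq_le_norm_sub_smul_sq_add {s φ : ℝ} (hs : s ≤ 1) (hsφ : 1 ≤ s ^ 2 + φ ^ 2)
    (z z' : E) :
    (1 + s) / 2 * ‖z' - z‖ ^ 2 ≤ ‖z - s • z'‖ ^ 2 + ‖φ • z'‖ ^ 2 :=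
  calc (1 + s) / 2 * ‖z' - z‖ ^ 2
      ≤ (1 + s) / 2 * ‖z' - z‖ ^ 2 + (1 - s) / 2 * ‖z + z'‖ ^ 2 :=
        le_add_of_nonneg_right (mul_nonneg (by linarith) (sq_nonneg _))
    _ = ‖z‖ ^ 2 - 2 * s * ⟪z, z'⟫ + ‖z'‖ ^ 2 := (norm_sq_sub_two_mul_inner_add_norm_sq z z' s).symm
    _ ≤ ‖z‖ ^ 2 - 2 * s * ⟪z, z'⟫ + (s ^ 2 + φ ^ 2) * ‖z'‖ ^ 2 := by
        gcongr
        exact le_mul_of_one_le_left (sq_nonneg _) hsφ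
    _ = ‖z - s • z'‖ ^ 2 + ‖φ • z'‖ ^ 2 := by
        rw [norm_sub_sq_real, real_inner_smul_right, norm_smul, norm_smul, mul_pow, mul_pow,
          Real.norm_eq_abs, Real.norm_eq_abs, sq_abs, sq_abs]
        ring

end InnerProductSpace

theorem one_le_sqrt_one_sub_sq_sq_add_sq (φ : ℝ) : 1 ≤ √(1 - φ ^ 2) ^ 2 + φ ^ 2 := by
  rw [Real.sq_sqrt']
  linarith [le_max_left (1 - φ ^ 2) 0]

theorem stmt3_general {k : ℕ} (z z' : EuclideanSpace ℝ (Fin k)) (φ : ℝ) :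
    ((1 + Real.sqrt (1 - φ ^ 2)) / 2) * ‖z' - z‖ ^ 2
      ≤ ‖z - Real.sqrt (1 - φ ^ 2) • z'‖ ^ 2
        + ‖(0 : EuclideanSpace ℝ (Fin k)) - φ • z'‖ ^ 2
    ∧ ‖z' - z‖ ^ 2 / 2 ≤ ((1 + Real.sqrt (1 - φ ^ 2)) / 2) * ‖z' - z‖ ^ 2 := by
  have hs : √(1 - φ ^ 2) ≤ 1 := Real.sqrt_le_one.mpr (sub_le_self _ (sq_nonneg φ))
  refine ⟨?_, ?_⟩
  · rw [zero_sub, norm_neg]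
    exact mul_norm_sub_sq_le_norm_sub_smul_sq_add hs (one_le_sqrt_one_sub_sq_sq_add_sq φ) z z'
  · have hs0 : 0 ≤ √(1 - φ ^ 2) := Real.sqrt_nonneg _
    nlinarith [sq_nonneg ‖z' - z‖]

theorem stmt3 {k : ℕ} (z z' : EuclideanSpace ℝ (Fin k)) (φ : ℝ)
    (h0 : 0 ≤ φ) (h1 : φ ≤ 1) :
    ((1 + Real.sqrt (1 - φ ^ 2)) / 2) * ‖z' - z‖ ^ 2
      ≤ ‖z - Real.sqrt (1 - φ ^ 2) • z'‖ ^ 2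
        + ‖(0 : EuclideanSpace ℝ (Fin k)) - φ • z'‖ ^ 2
    ∧ ‖z' - z‖ ^ 2 / 2 ≤ ((1 + Real.sqrt (1 - φ ^ 2)) / 2) * ‖z' - z‖ ^ 2 :=
  stmt3_general z z' φ
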